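/- arXiv:1812.10086 — 3 statements merged into one kernel-verified Lean document; each statement's English description precedes it below -/
import Mathlib

section
/- Let α > 0, 0 < a < b, and t ≥ b. Then ∫_a^t ((t-s)/s)·(log(s/a))^α ds = (α+1)^{-1}·∫_a^t (log(s/a))^{α+1} ds ≥ (α+1)^{-1}·(1 - a/b)·t·(log(t/b))^{α+1}. -/
/-!
Integrating by parts against `s ↦ t - s`, which vanishes at `s = t`, while `log (s / a) ^ (α + 1)`
vanishes at `s = a`, turns the weight `(t - s) / s` into the primitive of `s⁻¹ log (s / a) ^ α`.
For the lower bound, drop the nonnegative part of the integral over `[a, a t / b]`: on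
`[a t / b, t]` we have `s / a ≥ t / b`, an interval of length `(1 - a / b) t`.
-/

open Real Set intervalIntegral MeasureTheory
open scoped Interval

theorem integral_sub_mul_deriv_eq_integral {f f' : ℝ → ℝ} {a t : ℝ}
    (hf : ∀ s ∈ [[a, t]], HasDerivAt f (f' s) s) (hf' : IntervalIntegrable f' volume a t)
    (hfa : f a = 0) :
    ∫ s in a..t, (t - s) * f' s = ∫ s in a..t, f s := by
  have hu : ∀ s ∈ [[a, t]], HasDerivAt (fun x => t - x) (-1) s := fun s _ =>
    (hasDerivAt_id s).const_sub t
  rw [integral_mul_deriv_eq_deriv_mul hu hf intervalIntegrable_const hf', hfa]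
  simp

theorem mul_le_integral_of_nonneg_of_le_on {f : ℝ → ℝ} {a c t m : ℝ} (hac : a ≤ c) (hct : c ≤ t)
    (hf : IntervalIntegrable f volume a t) (hf0 : ∀ s ∈ Icc a c, 0 ≤ f s)
    (hm : ∀ s ∈ Icc c t, m ≤ f s) :
    (t - c) * m ≤ ∫ s in a..t, f s := by
  have hac' : IntervalIntegrable f volume a c :=
    hf.mono_set (uIcc_subset_uIcc_left (by simp [uIcc_of_le (hac.trans hct), hac, hct]))
  have hct' : IntervalIntegrable f volume c t :=
    hf.mono_set (uIcc_subset_uIcc_right (by simp [uIcc_of_le (hac.trans hct), hac, hct]))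
  have hleft : 0 ≤ ∫ s in a..c, f s := integral_nonneg hac hf0
  have hright : ∫ s in c..t, m ≤ ∫ s in c..t, f s :=
    integral_mono_on hct intervalIntegrable_const hct' hm
  rw [← integral_add_adjacent_intervals hac' hct']
  simp only [intervalIntegral.integral_const, smul_eq_mul] at hright
  linarith

theorem continuousOn_log_div_rpow {a β : ℝ} (ha : a ≠ 0) (hβ : 0 ≤ β) :
    ContinuousOn (fun s => log (s / a) ^ β) {0}ᶜ :=
  (continuous_rpow_const hβ).comp_continuousOn <|
    continuousOn_log.comp (continuousOn_id.div_const a) fun _ hs => div_ne_zero hs ha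

theorem hasDerivAt_log_div_rpow_add_one {a s β : ℝ} (ha : a ≠ 0) (hs : s ≠ 0) (hβ : 0 ≤ β) :
    HasDerivAt (fun x => log (x / a) ^ (β + 1)) ((β + 1) * log (s / a) ^ β / s) s := by
  have hlog : HasDerivAt (fun x => log (x / a)) (1 / a / (s / a)) s :=
    ((hasDerivAt_id s).div_const a).log (div_ne_zero hs ha)
  convert hlog.rpow_const (p := β + 1) (Or.inr (by linarith)) using 1
  field_simp
  ring_nf

theorem integral_sub_div_mul_log_div_rpow {a t β : ℝ} (ha : 0 < a) (hat : a ≤ t) (hβ : 0 ≤ β) :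
    ∫ s in a..t, ((t - s) / s) * log (s / a) ^ β
      = (β + 1)⁻¹ * ∫ s in a..t, log (s / a) ^ (β + 1) := by
  have hpos : ∀ s ∈ [[a, t]], s ≠ 0 := fun s hs =>
    (ha.trans_le (by rw [uIcc_of_le hat] at hs; exact hs.1)).ne'
  have hderiv : ∀ s ∈ [[a, t]], HasDerivAt (fun x => log (x / a) ^ (β + 1))
      ((β + 1) * log (s / a) ^ β / s) s := fun s hs =>
    hasDerivAt_log_div_rpow_add_one ha.ne' (hpos s hs) hβ
  have hint : IntervalIntegrable (fun s => (β + 1) * log (s / a) ^ β / s) volume a t :=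
    ContinuousOn.intervalIntegrable <|
      (((continuousOn_log_div_rpow ha.ne' hβ).mono hpos).const_smul (β + 1)).div continuousOn_id
        hpos
  have hend : log (a / a) ^ (β + 1) = 0 := by
    rw [div_self ha.ne', log_one, zero_rpow (by linarith)]
  rw [← integral_sub_mul_deriv_eq_integral hderiv hint hend, ← intervalIntegral.integral_const_mul]
  have hβ' : β + 1 ≠ 0 := by linarith
  refine integral_congr fun s _ => ?_
  field_simp

theorem mul_log_div_rpow_le_integral {a b t β : ℝ} (ha : 0 < a) (hab : a ≤ b) (hbt : b ≤ t)
    (hβ : 0 ≤ β) :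
    (1 - a / b) * t * log (t / b) ^ β ≤ ∫ s in a..t, log (s / a) ^ β := by
  have hb : 0 < b := ha.trans_le hab
  have hat : a ≤ t := hab.trans hbt
  have hc : a ≤ a * t / b := by rw [le_div_iff₀ hb]; nlinarith
  have hct : a * t / b ≤ t := by rw [div_le_iff₀ hb]; nlinarith
  have hint : IntervalIntegrable (fun s => log (s / a) ^ β) volume a t :=
    ContinuousOn.intervalIntegrable <| (continuousOn_log_div_rpow ha.ne' hβ).mono fun s hs =>
      (ha.trans_le (by rw [uIcc_of_le hat] at hs; exact hs.1)).ne'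
  have hnonneg : ∀ s ∈ Icc a (a * t / b), 0 ≤ log (s / a) ^ β := fun s hs =>
    rpow_nonneg (log_nonneg ((one_le_div ha).mpr hs.1)) β
  have hlower : ∀ s ∈ Icc (a * t / b) t, log (t / b) ^ β ≤ log (s / a) ^ β := by
    intro s hs
    have hts : t / b ≤ s / a := by
      rw [div_le_div_iff₀ hb ha]
      nlinarith [(div_le_iff₀ hb).mp hs.1]
    exact rpow_le_rpow (log_nonneg ((one_le_div hb).mpr hbt))
      (log_le_log (div_pos (hb.trans_le hbt) hb) hts) hβ
  have hlen : (1 - a / b) * t = t - a * t / b := by ring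
  rw [hlen]
  exact mul_le_integral_of_nonneg_of_le_on hc hct hint hnonneg hlower

theorem stmt15 (α a b t : ℝ) (hα : 0 < α) (ha : 0 < a) (hab : a < b) (ht : b ≤ t) :
    (∫ s in a..t, ((t - s) / s) * Real.log (s / a) ^ α)
        = (α + 1)⁻¹ * ∫ s in a..t, Real.log (s / a) ^ (α + 1) ∧
    (α + 1)⁻¹ * (∫ s in a..t, Real.log (s / a) ^ (α + 1))
        ≥ (α + 1)⁻¹ * (1 - a / b) * t * Real.log (t / b) ^ (α + 1) := by
  refine ⟨integral_sub_div_mul_log_div_rpow ha (hab.le.trans ht) hα.le, ?_⟩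
  rw [mul_assoc, mul_assoc, ← mul_assoc (1 - a / b)]
  exact mul_le_mul_of_nonneg_left (mul_log_div_rpow_le_integral ha hab.le ht (by linarith))
    (by positivity)
end

section
/- Let α ≥ 0, 0 < a < b, n ≥ 1 a real number, and t ≥ b. Then ∫_a^t (t-s)·s^{n-1}·(log(s/a))^α ds ≥ (a/b)^{n-1}·(1 - a/b)²·(1/2)·t^{n+1}·(log(t/b))^α. -/
theorem stmt16 (α a b n t : ℝ) (hα : 0 ≤ α) (ha : 0 < a) (hab : a < b) (hn : 1 ≤ n)
    (ht : b ≤ t) :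
    (∫ s in a..t, (t - s) * s ^ (n - 1) * Real.log (s / a) ^ α)
      ≥ (a / b) ^ (n - 1) * (1 - a / b) ^ 2 * (1 / 2) * t ^ (n + 1)
          * Real.log (t / b) ^ α := by
  have hb : 0 < b := ha.trans hab
  have ht0 : 0 < t := lt_of_lt_of_le hb ht
  set c := a * t / b with hc
  have hac : a ≤ c := by rw [hc, le_div_iff₀ hb]; nlinarith
  have hct : c ≤ t := by rw [hc, div_le_iff₀ hb]; nlinarith
  have hc0 : 0 < c := lt_of_lt_of_le ha hac
  set f := fun s : ℝ => (t - s) * s ^ (n - 1) * Real.log (s / a) ^ α with hf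
  have hcont : ContinuousOn f (Set.Icc a t) := by
    apply ContinuousOn.mul
    · apply ContinuousOn.mul
      · exact (continuous_const.sub continuous_id).continuousOn
      · intro s hs
        exact (Real.continuousAt_rpow_const s (n - 1)
          (Or.inl (ne_of_gt (lt_of_lt_of_le ha hs.1)))).continuousWithinAt
    · intro s hs
      have hs0 : (0:ℝ) < s := lt_of_lt_of_le ha hs.1
      have h1 : ContinuousAt (fun x : ℝ => Real.log (x / a)) s :=
        (Real.continuousAt_log (by positivity)).comp
          ((continuous_id.div_const a).continuousAt)
      exact (h1.rpow_const (Or.inr hα)).continuousWithinAt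
  have hint1 : IntervalIntegrable f MeasureTheory.volume a c :=
    (hcont.mono (Set.Icc_subset_Icc le_rfl hct)).intervalIntegrable_of_Icc hac
  have hint2 : IntervalIntegrable f MeasureTheory.volume c t :=
    (hcont.mono (Set.Icc_subset_Icc hac le_rfl)).intervalIntegrable_of_Icc hct
  set K := c ^ (n - 1) * Real.log (t / b) ^ α with hK
  set g := fun s : ℝ => (t - s) * K with hg
  have hintg : IntervalIntegrable g MeasureTheory.volume c t :=
    (((continuous_const.sub continuous_id).mul continuous_const)).intervalIntegrable c t
  have hlogtb : 0 ≤ Real.log (t / b) := Real.log_nonneg ((one_le_div hb).mpr ht)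
  -- pointwise bound on [c, t]
  have hpt : ∀ s ∈ Set.Icc c t, g s ≤ f s := by
    intro s hs
    have hs0 : (0:ℝ) < s := lt_of_lt_of_le hc0 hs.1
    have h1 : (0:ℝ) ≤ t - s := by linarith [hs.2]
    have h2 : c ^ (n - 1) ≤ s ^ (n - 1) :=
      Real.rpow_le_rpow hc0.le hs.1 (by linarith)
    have hlog : Real.log (t / b) ≤ Real.log (s / a) := by
      apply Real.log_le_log (by positivity)
      rw [div_le_div_iff₀ hb ha]
      have := hs.1
      rw [hc, div_le_iff₀ hb] at this
      nlinarith
    have h3 : Real.log (t / b) ^ α ≤ Real.log (s / a) ^ α :=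
      Real.rpow_le_rpow hlogtb hlog hα
    have h4 : c ^ (n - 1) * Real.log (t / b) ^ α
        ≤ s ^ (n - 1) * Real.log (s / a) ^ α :=
      mul_le_mul h2 h3 (Real.rpow_nonneg hlogtb α) (Real.rpow_nonneg hs0.le _)
    calc g s = (t - s) * (c ^ (n - 1) * Real.log (t / b) ^ α) := by rw [hg]
      _ ≤ (t - s) * (s ^ (n - 1) * Real.log (s / a) ^ α) :=
          mul_le_mul_of_nonneg_left h4 h1
      _ = f s := by rw [hf]; ring
  have hmono : (∫ s in c..t, g s) ≤ ∫ s in c..t, f s :=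
    intervalIntegral.integral_mono_on hct hintg hint2 hpt
  have hnonneg : 0 ≤ ∫ s in a..c, f s := by
    apply intervalIntegral.integral_nonneg hac
    intro s hs
    have hs0 : (0:ℝ) < s := lt_of_lt_of_le ha hs.1
    have h1 : (0:ℝ) ≤ t - s := by linarith [hs.2, hct]
    have h2 : (0:ℝ) ≤ Real.log (s / a) := Real.log_nonneg ((one_le_div ha).mpr hs.1)
    exact mul_nonneg (mul_nonneg h1 (Real.rpow_nonneg hs0.le _)) (Real.rpow_nonneg h2 α)
  have hsplit : (∫ s in a..t, f s) = (∫ s in a..c, f s) + ∫ s in c..t, f s :=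
    (intervalIntegral.integral_add_adjacent_intervals hint1 hint2).symm
  -- compute ∫ g
  have hbase : (∫ s in c..t, (t - s)) = (t - c) ^ 2 / 2 := by
    rw [intervalIntegral.integral_sub intervalIntegrable_const
      intervalIntegral.intervalIntegrable_id]
    simp [integral_id]
    ring
  have hgval : (∫ s in c..t, g s) = (t - c) ^ 2 / 2 * K := by
    rw [hg]
    rw [intervalIntegral.integral_mul_const, hbase]
  -- algebra: (t-c)^2/2 * K = RHS
  have hrhs : (t - c) ^ 2 / 2 * K
      = (a / b) ^ (n - 1) * (1 - a / b) ^ 2 * (1 / 2) * t ^ (n + 1)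
        * Real.log (t / b) ^ α := by
    have hcab : c = (a / b) * t := by rw [hc]; ring
    have h1 : c ^ (n - 1) = (a / b) ^ (n - 1) * t ^ (n - 1) := by
      rw [hcab, Real.mul_rpow (by positivity) ht0.le]
    have h2 : t ^ (n + 1) = t ^ (n - 1) * t ^ (2:ℕ) := by
      rw [← Real.rpow_natCast t 2, ← Real.rpow_add ht0]
      norm_num
      ring_nf
    have h3 : (t - c) ^ 2 = t ^ 2 * (1 - a / b) ^ 2 := by
      rw [hcab]; ring
    rw [hK, h1, h2, h3]
    ring
  calc (∫ s in a..t, f s) = (∫ s in a..c, f s) + ∫ s in c..t, f s := hsplit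
    _ ≥ 0 + ∫ s in c..t, g s := by gcongr
    _ = (t - c) ^ 2 / 2 * K := by rw [zero_add, hgval]
    _ = _ := hrhs
end

section
/- Let λ > 0 and let b : [0,∞) → ℝ be continuous, nonnegative and integrable. Suppose y : [s,∞) → ℝ solves y'' + b(t)y' - λ²y = 0 with y(s) = 1, y'(s) = 0. Then y(t) ≥ e^{-‖b‖_{L¹}}·cosh(λ(t-s)) for all t ≥ s. -/
open Real Set MeasureTheory

/-!
Let `B(t) = ∫ₛᵗ b`. For `μ = ±λ` the quantity `e^{B - μ(t-s)} (y' + μ y)` has derivative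
`μ b y e^{B - μ(t-s)}`, so while `y ≥ 0` its product with `μ` increases from the initial value `μ²`.
Adding the inequalities for `μ = λ` and `μ = -λ` gives `e^{B(t)} y(t) ≥ cosh (λ(t - s)) > 0`; a
first-exit argument then shows that `y` stays positive, and `B ≤ ‖b‖_{L¹}` finishes the proof.
-/

theorem le_of_hasDerivWithinAt_Ici_nonneg {f f' : ℝ → ℝ} {s t : ℝ} (hst : s ≤ t)
    (hf : ∀ u ≥ s, HasDerivWithinAt f (f' u) (Ici s) u) (hf' : ∀ u ∈ Ioo s t, 0 ≤ f' u) :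
    f s ≤ f t := by
  refine monotoneOn_of_hasDerivWithinAt_nonneg (f' := f') (convex_Icc s t)
    (fun u hu => (hf u hu.1).continuousWithinAt.mono Icc_subset_Ici_self) ?_ ?_
    (left_mem_Icc.2 hst) (right_mem_Icc.2 hst) hst
  · rw [interior_Icc]
    exact fun u hu => (hf u hu.1.le).mono (Ioo_subset_Icc_self.trans Icc_subset_Ici_self)
  · rwa [interior_Icc]

theorem hasDerivWithinAt_integral_Ici {b : ℝ → ℝ} {s : ℝ} (hb : ContinuousOn b (Ici s)) :
    ∀ u ≥ s, HasDerivWithinAt (fun u => ∫ τ in s..u, b τ) (b u) (Ici s) u := by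
  intro u hu
  have hint : IntervalIntegrable b volume s u :=
    (hb.mono Icc_subset_Ici_self).intervalIntegrable_of_Icc hu
  rcases hu.eq_or_lt with rfl | hsu
  · exact intervalIntegral.integral_hasDerivWithinAt_right hint
      ((hb.mono Ioi_subset_Ici_self).stronglyMeasurableAtFilter_nhdsWithin measurableSet_Ioi s)
      ((hb s self_mem_Ici).mono Ioi_subset_Ici_self)
  · exact (intervalIntegral.integral_hasDerivAt_right hint
      ((hb.mono Ioi_subset_Ici_self).stronglyMeasurableAtFilter isOpen_Ioi u hsu)
      (hb.continuousAt (Ici_mem_nhds hsu))).hasDerivWithinAt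

theorem pos_of_forall_Ico_pos_imp_pos {f : ℝ → ℝ} {s : ℝ} (hf : ContinuousOn f (Ici s))
    (h : ∀ t ≥ s, (∀ u ∈ Ico s t, 0 < f u) → 0 < f t) : ∀ t ≥ s, 0 < f t := by
  intro t ht
  by_contra! hft
  set Z := Icc s t ∩ f ⁻¹' Iic 0
  have hZ : IsClosed Z :=
    (hf.mono Icc_subset_Ici_self).preimage_isClosed_of_isClosed isClosed_Icc isClosed_Iic
  have hZbdd : BddBelow Z := ⟨s, fun u hu => hu.1.1⟩
  have hmem : sInf Z ∈ Z := hZ.csInf_mem ⟨t, ⟨ht, le_rfl⟩, hft⟩ hZbdd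
  refine (h _ hmem.1.1 fun u hu => ?_).not_ge hmem.2
  by_contra! hfu
  exact (csInf_le hZbdd ⟨⟨hu.1, hu.2.le.trans hmem.1.2⟩, hfu⟩).not_gt hu.2

/-- For `μ² = λ²` the equation factors as `(∂ + b - μ)(y' + μ y) = μ b y`, so with `B' = b`,
`exp (B - μ (t - s))` is an integrating factor. -/
noncomputable def weightedFactor (B y y' : ℝ → ℝ) (s μ t : ℝ) : ℝ :=
  exp (B t - μ * (t - s)) * (y' t + μ * y t)

structure IsDampedSolution (lam s : ℝ) (b y y' y'' : ℝ → ℝ) : Prop where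
  hasDerivAt : ∀ u ≥ s, HasDerivAt y (y' u) u
  hasDerivAt_deriv : ∀ u ≥ s, HasDerivAt y' (y'' u) u
  ode : ∀ u ≥ s, y'' u + b u * y' u - lam ^ 2 * y u = 0
  apply_start : y s = 1
  deriv_start : y' s = 0

section DampedEquation

variable {lam μ s t : ℝ} {b B y y' y'' : ℝ → ℝ}

theorem hasDerivWithinAt_weightedFactor
    (hB : ∀ u ≥ s, HasDerivWithinAt B (b u) (Ici s) u)
    (hy : ∀ u ≥ s, HasDerivAt y (y' u) u) (hy' : ∀ u ≥ s, HasDerivAt y' (y'' u) u)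
    (hode : ∀ u ≥ s, y'' u + b u * y' u - lam ^ 2 * y u = 0) (hμ : μ ^ 2 = lam ^ 2)
    (ht : t ≥ s) :
    HasDerivWithinAt (weightedFactor B y y' s μ)
      (μ * (exp (B t - μ * (t - s)) * b t * y t)) (Ici s) t := by
  have hexp : HasDerivWithinAt (fun u => exp (B u - μ * (u - s)))
      (exp (B t - μ * (t - s)) * (b t - μ)) (Ici s) t := by
    simpa using ((hB t ht).sub (((hasDerivWithinAt_id t _).sub_const s).const_mul μ)).exp
  have hsum : HasDerivWithinAt (fun u => y' u + μ * y u) (y'' t + μ * y' t) (Ici s) t :=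
    ((hy' t ht).add ((hy t ht).const_mul μ)).hasDerivWithinAt
  refine (hexp.mul hsum).congr_deriv ?_
  linear_combination exp (B t - μ * (t - s)) * (hode t ht) - exp (B t - μ * (t - s)) * y t * hμ

namespace IsDampedSolution

theorem sq_mul_exp_le (h : IsDampedSolution lam s b y y' y'')
    (hB : ∀ u ≥ s, HasDerivWithinAt B (b u) (Ici s) u) (hBs : B s = 0) (hb : ∀ u ≥ s, 0 ≤ b u)
    (hμ : μ ^ 2 = lam ^ 2) (hst : s ≤ t) (hy_nonneg : ∀ u ∈ Ioo s t, 0 ≤ y u) :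
    μ ^ 2 * exp (μ * (t - s)) ≤ μ * (exp (B t) * (y' t + μ * y t)) := by
  have hgrowth := le_of_hasDerivWithinAt_Ici_nonneg hst
    (fun u hu => (hasDerivWithinAt_weightedFactor hB h.hasDerivAt h.hasDerivAt_deriv h.ode hμ
      hu).const_mul μ)
    fun u hu => by
      rw [← mul_assoc]
      exact mul_nonneg (mul_self_nonneg μ)
        (mul_nonneg (mul_nonneg (exp_pos _).le (hb u hu.1.le)) (hy_nonneg u hu))
  have hs : μ * weightedFactor B y y' s μ s = μ ^ 2 := by
    simp [weightedFactor, hBs, h.apply_start, h.deriv_start, sq]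
  calc μ ^ 2 * exp (μ * (t - s))
      ≤ μ * weightedFactor B y y' s μ t * exp (μ * (t - s)) := by
        rw [← hs]; gcongr
    _ = μ * (exp (B t) * (y' t + μ * y t)) := by
        rw [weightedFactor, exp_sub]; field_simp

theorem cosh_le_exp_mul (h : IsDampedSolution lam s b y y' y'')
    (hB : ∀ u ≥ s, HasDerivWithinAt B (b u) (Ici s) u) (hBs : B s = 0) (hb : ∀ u ≥ s, 0 ≤ b u)
    (hlam : 0 < lam) (hst : s ≤ t) (hy_nonneg : ∀ u ∈ Ioo s t, 0 ≤ y u) :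
    cosh (lam * (t - s)) ≤ exp (B t) * y t := by
  have hplus := h.sq_mul_exp_le (μ := lam) hB hBs hb rfl hst hy_nonneg
  have hminus := h.sq_mul_exp_le (μ := -lam) hB hBs hb (neg_sq lam) hst hy_nonneg
  rw [neg_sq, neg_mul] at hminus
  rw [cosh_eq, ← mul_le_mul_iff_of_pos_left (pow_pos hlam 2)]
  linarith

theorem pos (h : IsDampedSolution lam s b y y' y'')
    (hB : ∀ u ≥ s, HasDerivWithinAt B (b u) (Ici s) u) (hBs : B s = 0) (hb : ∀ u ≥ s, 0 ≤ b u)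
    (hlam : 0 < lam) : ∀ t ≥ s, 0 < y t := by
  refine pos_of_forall_Ico_pos_imp_pos
    (fun u hu => (h.hasDerivAt u hu).continuousAt.continuousWithinAt) fun t ht hpos => ?_
  have hcosh := h.cosh_le_exp_mul hB hBs hb hlam ht fun u hu => (hpos u (Ioo_subset_Ico_self hu)).le
  exact pos_of_mul_pos_right ((cosh_pos _).trans_le hcosh) (exp_pos _).le

end IsDampedSolution

end DampedEquation

theorem intervalIntegral_le_setIntegral_Ici {b : ℝ → ℝ} {a s t : ℝ} (has : a ≤ s) (hst : s ≤ t)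
    (hb : IntegrableOn b (Ici a)) (hb_nonneg : ∀ u ≥ a, 0 ≤ b u) :
    ∫ τ in s..t, b τ ≤ ∫ τ in Ici a, b τ := by
  rw [intervalIntegral.integral_of_le hst]
  exact setIntegral_mono_set hb ((ae_restrict_iff' measurableSet_Ici).2 (.of_forall hb_nonneg))
    (.of_forall fun u hu => has.trans hu.1.le)

theorem stmt19 (lam : ℝ) (hlam : 0 < lam)
    (b : ℝ → ℝ) (hb_cont : ContinuousOn b (Set.Ici 0))
    (hb_nonneg : ∀ t ≥ (0:ℝ), 0 ≤ b t)
    (hb_int : MeasureTheory.IntegrableOn b (Set.Ici 0))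
    (s : ℝ) (hs : 0 ≤ s)
    (y y' y'' : ℝ → ℝ)
    (hy : ∀ t ≥ s, HasDerivAt y (y' t) t)
    (hy' : ∀ t ≥ s, HasDerivAt y' (y'' t) t)
    (hode : ∀ t ≥ s, y'' t + b t * y' t - lam ^ 2 * y t = 0)
    (hys : y s = 1) (hy's : y' s = 0) :
    ∀ t ≥ s, y t ≥ Real.exp (-(∫ τ in Set.Ici (0:ℝ), b τ)) * Real.cosh (lam * (t - s)) := by
  intro t ht
  have h : IsDampedSolution lam s b y y' y'' := ⟨hy, hy', hode, hys, hy's⟩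
  have hb : ∀ u ≥ s, 0 ≤ b u := fun u hu => hb_nonneg u (hs.trans hu)
  have hB := hasDerivWithinAt_integral_Ici (hb_cont.mono (Ici_subset_Ici.2 hs))
  have hBs : ∫ τ in s..s, b τ = 0 := intervalIntegral.integral_same
  have hy_pos := h.pos hB hBs hb hlam
  have hcosh := h.cosh_le_exp_mul hB hBs hb hlam ht fun u hu => (hy_pos u hu.1.le).le
  have hB_le := intervalIntegral_le_setIntegral_Ici hs ht hb_int hb_nonneg
  calc exp (-∫ τ in Ici 0, b τ) * cosh (lam * (t - s))
      ≤ exp (-∫ τ in Ici 0, b τ) * (exp (∫ τ in s..t, b τ) * y t) := by gcongr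
    _ = exp ((∫ τ in s..t, b τ) - ∫ τ in Ici 0, b τ) * y t := by
        rw [sub_eq_neg_add, exp_add, mul_assoc]
    _ ≤ y t := mul_le_of_le_one_left (hy_pos t ht).le (exp_le_one_iff.2 (by linarith))
end
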